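/- Let G be a connected graph, s,t vertices, A ⊆ V(G)∖{s,t} with G[{s}∪A] connected, and let H be obtained from G by contracting {s}∪A to s. Then for every minimal s,t-separator S of H, the s-side component satisfies C_s(G−S) = C_s(H−S) ∪ A and the t-side component satisfies C_t(G−S) = C_t(H−S). -/

import Mathlib

variable {V : Type*}

/-- Reachability in `G` by a walk avoiding the vertex set `S`. -/
def ReachAvoid (G : SimpleGraph V) (S : Set V) (u v : V) : Prop :=
  ∃ w : G.Walk u v, ∀ x ∈ w.support, x ∉ S

/-- The connected component of `G − S` containing `s`, as a subset of `V`. -/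
def compOf (G : SimpleGraph V) (S : Set V) (s : V) : Set V :=
  {v | ReachAvoid G S s v}

/-- `S` is an `s,t`-separator of `G`. -/
def IsSep (G : SimpleGraph V) (s t : V) (S : Set V) : Prop :=
  s ∉ S ∧ t ∉ S ∧ ¬ ReachAvoid G S s t

/-- `S` is a minimal `s,t`-separator of `G`. -/
def IsMinSep (G : SimpleGraph V) (s t : V) (S : Set V) : Prop :=
  IsSep G s t S ∧ ∀ S' ⊂ S, ¬ IsSep G s t S'

/-- The open neighborhood of a vertex set `X`. -/
def nbhd (G : SimpleGraph V) (X : Set V) : Set V :=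
  {v | v ∉ X ∧ ∃ x ∈ X, G.Adj x v}

/-- The closed neighborhood of a vertex `v`. -/
def clNbhd (G : SimpleGraph V) (v : V) : Set V :=
  insert v (G.neighborSet v)

/-- `S` is a minimal `s,t`-separator close to `sA`. -/
def CloseTo (G : SimpleGraph V) (s t : V) (A : Set V) (S : Set V) : Prop :=
  IsMinSep G s t S ∧ A ⊆ compOf G S s ∧
    ∀ T, IsMinSep G s t T → T ≠ S → A ⊆ compOf G T s →
      ¬ compOf G T s ⊆ compOf G S s

/-- `G` contains no asteroidal triple. -/
def IsATFree (G : SimpleGraph V) : Prop :=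
  ¬ ∃ a b c : V, a ≠ b ∧ a ≠ c ∧ b ≠ c ∧
    ¬ G.Adj a b ∧ ¬ G.Adj a c ∧ ¬ G.Adj b c ∧
    (∃ w : G.Walk a b, ∀ x ∈ w.support, x ∉ clNbhd G c) ∧
    (∃ w : G.Walk a c, ∀ x ∈ w.support, x ∉ clNbhd G b) ∧
    (∃ w : G.Walk b c, ∀ x ∈ w.support, x ∉ clNbhd G a)

/-- `S` is an `A,B`-separator. -/
def IsABSep (G : SimpleGraph V) (A B : Set V) (S : Set V) : Prop :=
  S ⊆ (A ∪ B)ᶜ ∧ ∀ a ∈ A, ∀ b ∈ B, ¬ ReachAvoid G S a b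

/-- `S` is a minimal `A,B`-separator. -/
def IsMinABSep (G : SimpleGraph V) (A B S : Set V) : Prop :=
  IsABSep G A B S ∧ ∀ S' ⊂ S, ¬ IsABSep G A B S'

/-- `S` is a safe (connectivity-preserving) `A,B`-separator: removing `S`
leaves two distinct components, one containing `A` and one containing `B`. -/
def IsSafeSep (G : SimpleGraph V) (A B S : Set V) : Prop :=
  S ⊆ (A ∪ B)ᶜ ∧ ∃ a b : V, a ∉ S ∧ b ∉ S ∧
    A ⊆ compOf G S a ∧ B ⊆ compOf G S b ∧
    Disjoint (compOf G S a) (compOf G S b)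

/-- The induced subgraph on `X` is connected (any two vertices of `X` are joined
by a walk staying in `X`). -/
def ConnIn (G : SimpleGraph V) (X : Set V) : Prop :=
  ∀ x ∈ X, ∀ y ∈ X, ∃ w : G.Walk x y, ∀ z ∈ w.support, z ∈ X

/-- The graph obtained from `G` by contracting `{s} ∪ A` to the vertex `s`
(the vertices of `A` become isolated). -/
def contractGraph (G : SimpleGraph V) (s : V) (A : Set V) : SimpleGraph V where
  Adj u v := u ∉ A ∧ v ∉ A ∧ u ≠ v ∧
    (G.Adj u v ∨ (u = s ∧ ∃ a ∈ A, G.Adj a v) ∨ (v = s ∧ ∃ a ∈ A, G.Adj a u))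
  symm := by
    constructor
    rintro u v ⟨hu, hv, hne, h⟩
    refine ⟨hv, hu, hne.symm, ?_⟩
    rcases h with h | h | h
    · exact Or.inl h.symm
    · exact Or.inr (Or.inr h)
    · exact Or.inr (Or.inl h)
  loopless := by
    constructor
    rintro u ⟨_, _, hne, _⟩
    exact hne rfl

/-- The graph obtained from `G` by adding all edges from `s` to `N_G[A]`. -/
def addApex (G : SimpleGraph V) (s : V) (A : Set V) : SimpleGraph V where
  Adj u v := G.Adj u v ∨
    (u = s ∧ v ≠ s ∧ v ∈ A ∪ nbhd G A) ∨
    (v = s ∧ u ≠ s ∧ u ∈ A ∪ nbhd G A)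
  symm := by
    constructor
    rintro u v (h | h | h)
    · exact Or.inl h.symm
    · exact Or.inr (Or.inr h)
    · exact Or.inr (Or.inl h)
  loopless := by
    constructor
    rintro u (h | ⟨h1, h2, _⟩ | ⟨h1, h2, _⟩)
    · exact G.loopless.irrefl u h
    · exact h2 h1
    · exact h2 h1

/-- The graph obtained from `G` by subdividing every edge. -/
def subdiv (G : SimpleGraph V) : SimpleGraph (V ⊕ G.edgeSet) where
  Adj x y :=
    match x, y with
    | Sum.inl u, Sum.inr e => u ∈ (e : Sym2 V)
    | Sum.inr e, Sum.inl u => u ∈ (e : Sym2 V)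
    | _, _ => False
  symm := by
    constructor
    rintro (u | e) (v | f) h <;> exact h
  loopless := by
    constructor
    rintro (u | e) h <;> exact h

/-- The instance `2Dis(G,A,B)` of 2-Disjoint-Connected-Subgraphs has a solution. -/
def TwoDisSolvable (G : SimpleGraph V) (A B : Set V) : Prop :=
  ∃ A₁ B₁ : Set V, Disjoint A₁ B₁ ∧ A ⊆ A₁ ∧ B ⊆ B₁ ∧
    ConnIn G A₁ ∧ ConnIn G B₁


/-!
Sending `{s} ∪ A` to `s` maps every `G`-walk avoiding `S` to an `H`-walk avoiding `S`, so `S`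
still separates `s` from `t` in `G`. Conversely, a minimal separator of `H` misses `A`: the
vertices of `A` are isolated in `H`, so they lie on no walk from `s`. Hence `G[{s} ∪ A]` survives
in `G − S`, and every `H`-edge at `s` lifts to a `G`-walk through `{s} ∪ A`. The components of
`s` and `t` in `G − S` and `H − S` therefore agree outside `A`, and `A` joins the side of `s`.
-/

namespace ReachAvoid

variable {G : SimpleGraph V} {S : Set V} {u v w : V}

lemma refl (hu : u ∉ S) : ReachAvoid G S u u :=
  ⟨.nil, by simpa using hu⟩

lemma symm (h : ReachAvoid G S u v) : ReachAvoid G S v u := by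
  obtain ⟨p, hp⟩ := h
  exact ⟨p.reverse, fun x hx => hp x (by simpa using hx)⟩

lemma trans (h₁ : ReachAvoid G S u v) (h₂ : ReachAvoid G S v w) : ReachAvoid G S u w := by
  obtain ⟨p, hp⟩ := h₁
  obtain ⟨q, hq⟩ := h₂
  refine ⟨p.append q, fun x hx => ?_⟩
  rcases p.mem_support_append_iff q |>.mp hx with hx | hx
  exacts [hp x hx, hq x hx]

lemma of_adj (h : G.Adj u v) (hu : u ∉ S) (hv : v ∉ S) : ReachAvoid G S u v :=
  ⟨h.toWalk, by simp [hu, hv]⟩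

lemma mono {T : Set V} (h : ReachAvoid G T u v) (hST : S ⊆ T) : ReachAvoid G S u v := by
  obtain ⟨p, hp⟩ := h
  exact ⟨p, fun x hx hxS => hp x hx (hST hxS)⟩

lemma map {W : Type*} {G' : SimpleGraph W} {S' : Set W} (f : V → W) (hf : ∀ x ∉ S, f x ∉ S')
    (hadj : ∀ x y, G.Adj x y → x ∉ S → y ∉ S → ReachAvoid G' S' (f x) (f y))
    (h : ReachAvoid G S u v) : ReachAvoid G' S' (f u) (f v) := by
  obtain ⟨p, hp⟩ := h
  induction p with
  | nil => exact refl (hf _ (hp _ (by simp)))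
  | cons hxy p ih =>
    simp only [SimpleGraph.Walk.support_cons, List.mem_cons, forall_eq_or_imp] at hp
    exact (hadj _ _ hxy hp.1 (hp.2 _ p.start_mem_support)).trans (ih hp.2)

end ReachAvoid

section Contraction

variable {G : SimpleGraph V} {s : V} {A S : Set V}

lemma contractGraph_walk_support_notMem {u v : V} (p : (contractGraph G s A).Walk u v)
    (hu : u ∉ A) : ∀ x ∈ p.support, x ∉ A := by
  induction p with
  | nil => simpa using hu
  | cons h p ih =>
    simp only [SimpleGraph.Walk.support_cons, List.mem_cons, forall_eq_or_imp]
    exact ⟨hu, ih h.2.1⟩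

lemma ReachAvoid.union_of_contractGraph {u v : V} (h : ReachAvoid (contractGraph G s A) S u v)
    (hu : u ∉ A) : ReachAvoid (contractGraph G s A) (S ∪ A) u v := by
  obtain ⟨p, hp⟩ := h
  exact ⟨p, fun x hx hxSA => hxSA.elim (hp x hx) (contractGraph_walk_support_notMem p hu x hx)⟩

lemma disjoint_of_isMinSep_contractGraph {t : V} (hsA : s ∉ A)
    (hS : IsMinSep (contractGraph G s A) s t S) : Disjoint A S := by
  obtain ⟨⟨hsS, htS, hsep⟩, hmin⟩ := hS
  refine Set.disjoint_left.mpr fun a haA haS => hmin (S \ {a}) (Set.sdiff_singleton_ssubset.2 haS)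
    ⟨fun h => hsS h.1, fun h => htS h.1, fun h => hsep ?_⟩
  refine (h.union_of_contractGraph hsA).mono fun x hx => ?_
  by_cases hxa : x = a
  exacts [Or.inr (hxa ▸ haA), Or.inl ⟨hx, hxa⟩]

open Classical in
variable (s A) in
noncomputable def contractMap (x : V) : V := if x ∈ insert s A then s else x

lemma contractMap_of_notMem {x : V} (hx : x ∉ A) : contractMap s A x = x := by
  unfold contractMap
  split_ifs with h
  · exact (h.resolve_right hx).symm
  · rfl

lemma ReachAvoid.map_contractMap (hsA : s ∉ A) (hsS : s ∉ S) {u v : V}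
    (h : ReachAvoid G S u v) :
    ReachAvoid (contractGraph G s A) S (contractMap s A u) (contractMap s A v) := by
  refine h.map _ (fun x hx => by unfold contractMap; split_ifs <;> assumption)
    fun x y hxy hx hy => ?_
  unfold contractMap
  split_ifs with hxs hys hys
  · exact .refl hsS
  · refine .of_adj ⟨hsA, fun hyA => hys (.inr hyA), fun h => hys (h ▸ .inl rfl), ?_⟩ hsS hy
    rcases hxs with rfl | hxA
    exacts [.inl hxy, .inr (.inl ⟨rfl, x, hxA, hxy⟩)]
  · refine .of_adj ⟨fun hxA => hxs (.inr hxA), hsA, fun h => hxs (h ▸ .inl rfl), ?_⟩ hx hsS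
    rcases hys with rfl | hyA
    exacts [.inl hxy, .inr (.inr ⟨rfl, y, hyA, hxy.symm⟩)]
  · exact .of_adj ⟨fun hxA => hxs (.inr hxA), fun hyA => hys (.inr hyA), hxy.ne, .inl hxy⟩
      hx hy

lemma ReachAvoid.of_connIn {X : Set V} (hX : ConnIn G X) (hXS : Disjoint X S) {x y : V}
    (hx : x ∈ X) (hy : y ∈ X) : ReachAvoid G S x y :=
  have ⟨p, hp⟩ := hX x hx y hy
  ⟨p, fun z hz => hXS.notMem_of_mem_left (hp z hz)⟩

lemma ReachAvoid.of_contractGraph (hconnA : ConnIn G (insert s A))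
    (hAS : Disjoint (insert s A) S) {u v : V} (h : ReachAvoid (contractGraph G s A) S u v) :
    ReachAvoid G S u v := by
  have hAS' : ∀ a ∈ A, a ∉ S := fun a ha => hAS.notMem_of_mem_left (.inr ha)
  refine h.map id (fun _ => id) fun x y hxy hx hy => ?_
  rcases hxy.2.2.2 with hxy | ⟨rfl, a, haA, hay⟩ | ⟨rfl, a, haA, hax⟩
  · exact .of_adj hxy hx hy
  · exact (of_connIn hconnA hAS (.inl rfl) (.inr haA)).trans (.of_adj hay (hAS' a haA) hy)
  · exact (ReachAvoid.of_adj hax.symm hx (hAS' a haA)).trans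
      (of_connIn hconnA hAS (.inr haA) (.inl rfl))

end Contraction

theorem stmt2_general (G : SimpleGraph V) (s t : V)
    (A : Set V) (hsA : s ∉ A) (htA : t ∉ A)
    (hconnA : ConnIn G (insert s A))
    (S : Set V) (hS : IsMinSep (contractGraph G s A) s t S) :
    compOf G S s = compOf (contractGraph G s A) S s ∪ A ∧
    compOf G S t = compOf (contractGraph G s A) S t := by
  have hAS : Disjoint (insert s A) S :=
    Set.disjoint_insert_left.mpr ⟨hS.1.1, disjoint_of_isMinSep_contractGraph hsA hS⟩
  have lift {u v : V} (h : ReachAvoid (contractGraph G s A) S u v) : ReachAvoid G S u v :=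
    h.of_contractGraph hconnA hAS
  have proj {u v : V} (hu : u ∉ A) (hv : v ∉ A) (h : ReachAvoid G S u v) :
      ReachAvoid (contractGraph G s A) S u v := by
    simpa only [contractMap_of_notMem hu, contractMap_of_notMem hv] using
      h.map_contractMap hsA hS.1.1
  have reach_s {a : V} (ha : a ∈ A) : ReachAvoid G S s a :=
    .of_connIn hconnA hAS (.inl rfl) (.inr ha)
  refine ⟨Set.ext fun v => ⟨fun hv => ?_, ?_⟩, Set.ext fun v => ⟨fun hv => ?_, lift⟩⟩
  · by_cases hvA : v ∈ A
    exacts [Or.inr hvA, Or.inl (proj hsA hvA hv)]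
  · rintro (hv | hv)
    exacts [lift hv, reach_s hv]
  · have hvA : v ∉ A := fun hvA => hS.1.2.2 (proj hsA htA ((reach_s hvA).trans hv.symm))
    exact proj htA hvA hv

theorem stmt2 (G : SimpleGraph V) (hconn : G.Connected) (s t : V)
    (A : Set V) (hsA : s ∉ A) (htA : t ∉ A)
    (hconnA : ConnIn G (insert s A))
    (S : Set V) (hS : IsMinSep (contractGraph G s A) s t S) :
    compOf G S s = compOf (contractGraph G s A) S s ∪ A ∧
    compOf G S t = compOf (contractGraph G s A) S t :=
  stmt2_general G s t A hsA htA hconnA S hS
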